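/- Let 0 < α < 1 and let f be a holomorphic function from the upper half-plane ℍ = {z ∈ ℂ : Im z > 0} into the unit disk 𝔻 = {w ∈ ℂ : |w| < 1} satisfying f(z + 2π) = e^{2πiα}·f(z) for all z ∈ ℍ. Then there exists a holomorphic function G on the full unit disk 𝔻 such that f(z) = e^{iαz}·G(e^{iz}) for all z ∈ ℍ. -/

import Mathlib

/-!
The twisted function `ψ z = e^{-iαz} f z` is `2π`-periodic on `ℍ`, so it descends through
`q = e^{iz}` to a holomorphic function on the punctured unit disk. Since `|f| < 1`, this function
grows at most like `|q|^{-α}` at the puncture, and `α < 1` makes the singularity removable.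
-/

open Complex Filter Asymptotics Function Periodic Set
open UpperHalfPlane (upperHalfPlaneSet isOpen_upperHalfPlaneSet)
open scoped Real Topology

theorem isLittleO_sub_inv_of_isBigO_rpow {E : Type*} [NormedAddCommGroup E] {f : ℂ → E} {c : ℂ}
    {β : ℝ} (hβ : β < 1) (hf : f =O[𝓝[≠] c] fun z => ‖z - c‖ ^ (-β)) :
    (fun z => f z - f c) =o[𝓝[≠] c] fun z => (z - c)⁻¹ := by
  have hlim : Tendsto (fun z => ‖z - c‖ ^ (1 - β)) (𝓝[≠] c) (𝓝 0) := by
    simpa [Real.zero_rpow (sub_ne_zero.2 hβ.ne')] using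
      ((tendsto_norm_sub_self_nhdsNE c).mono_right nhdsWithin_le_nhds).rpow_const
        (Or.inr (sub_nonneg.2 hβ.le))
  have hrpow : (fun z => ‖z - c‖ ^ (-β)) =o[𝓝[≠] c] fun z => (z - c)⁻¹ := by
    refine isLittleO_norm_right.1 <| (((isLittleO_one_iff ℝ).2 hlim).mul_isBigO
      (isBigO_refl (fun z => ‖(z - c)⁻¹‖) _)).congr' ?_ (by simp)
    filter_upwards [self_mem_nhdsWithin] with z hz
    rw [norm_inv, ← div_eq_mul_inv, ← Real.rpow_sub_one (norm_ne_zero_iff.2 (sub_ne_zero.2 hz))]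
    ring_nf
  exact (hf.trans_isLittleO hrpow).sub isBoundedUnder_const.isLittleO_sub_self_inv

namespace Function.Periodic

variable {h : ℝ}

theorem qParam_two_pi (z : ℂ) : qParam (2 * π) z = exp (I * z) := by
  rw [qParam]
  congr 1
  field_simp
  push_cast
  ring

theorem im_invQParam_pos (hh : 0 < h) {q : ℂ} (hq : q ∈ Metric.ball 0 1 \ {0}) :
    0 < (invQParam h q).im := by
  obtain ⟨hq1, hq0⟩ := hq
  rw [mem_ball_zero_iff] at hq1
  rw [im_invQParam]
  exact mul_pos_of_neg_of_neg (div_neg_of_neg_of_pos (neg_neg_of_pos hh) (by positivity))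
    (Real.log_neg (norm_pos_iff.2 hq0) hq1)

theorem differentiableOn_cuspFunction_ball {F : ℂ → ℂ} (hh : 0 < h) (hF : Periodic F h)
    (hd : ∀ z, 0 < z.im → DifferentiableAt ℂ F z) {β : ℝ} (hβ : β < 1)
    (hb : ∀ z, 0 < z.im → ‖F z‖ ≤ ‖qParam h z‖ ^ (-β)) :
    DifferentiableOn ℂ (cuspFunction h F) (Metric.ball 0 1) := by
  have hpunct : Metric.ball (0 : ℂ) 1 \ {0} ∈ 𝓝[≠] 0 :=
    sdiff_mem_nhdsWithin_compl (Metric.ball_mem_nhds 0 one_pos) _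
  have hdiff : DifferentiableOn ℂ (F ∘ invQParam h) (Metric.ball 0 1 \ {0}) := by
    intro q hq
    have := differentiableAt_cuspFunction hh.ne' hF (hd _ (im_invQParam_pos hh hq))
    rw [qParam_right_inv hh.ne' hq.2] at this
    exact (this.congr_of_eventuallyEq (eventuallyEq_of_mem
      ((Metric.isOpen_ball.sdiff isClosed_singleton).mem_nhds hq)
      fun q' hq' => (cuspFunction_eq_of_nonzero h F hq'.2).symm)).differentiableWithinAt
  have hbound : (F ∘ invQParam h) =O[𝓝[≠] 0] fun q => ‖q - 0‖ ^ (-β) := by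
    refine IsBigO.of_bound 1 (eventually_of_mem hpunct fun q hq => ?_)
    rw [sub_zero, one_mul, Real.norm_of_nonneg (by positivity), comp_apply]
    have := hb _ (im_invQParam_pos hh hq)
    rwa [qParam_right_inv hh.ne' hq.2] at this
  exact differentiableOn_update_limUnder_of_isLittleO (Metric.ball_mem_nhds 0 one_pos) hdiff
    (isLittleO_sub_inv_of_isBigO_rpow hβ hbound)

end Function.Periodic

theorem periodic_indicator_upperHalfPlaneSet {φ : ℂ → ℂ} {T : ℝ}
    (hφ : ∀ z, 0 < z.im → φ (z + T) = φ z) : Periodic (upperHalfPlaneSet.indicator φ) T := by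
  intro z
  by_cases hz : 0 < z.im
  · rw [indicator_of_mem (by simpa using hz), indicator_of_mem (by simpa using hz), hφ z hz]
  · rw [indicator_of_notMem (by simpa using hz), indicator_of_notMem (by simpa using hz)]

theorem differentiableAt_indicator_upperHalfPlaneSet {φ : ℂ → ℂ}
    (hφ : DifferentiableOn ℂ φ upperHalfPlaneSet) {z : ℂ} (hz : 0 < z.im) :
    DifferentiableAt ℂ (upperHalfPlaneSet.indicator φ) z :=
  (hφ.differentiableAt (isOpen_upperHalfPlaneSet.mem_nhds hz)).congr_of_eventuallyEq
    (eventuallyEq_of_mem (isOpen_upperHalfPlaneSet.mem_nhds hz) fun _ hw => indicator_of_mem hw φ)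

theorem norm_exp_neg_I_mul_ofReal_mul (α : ℝ) (z : ℂ) :
    ‖exp (-(I * α * z))‖ = ‖exp (I * z)‖ ^ (-α) := by
  rw [norm_exp, norm_exp, ← Real.exp_mul]
  congr 1
  simp [mul_re, mul_comm]

theorem elliptic_developing_map_structure_general (α : ℝ) (hα1 : α < 1) (f : ℂ → ℂ)
    (hf : DifferentiableOn ℂ f {z : ℂ | 0 < z.im})
    (hmaps : ∀ z : ℂ, 0 < z.im → ‖f z‖ < 1)
    (hper : ∀ z : ℂ, 0 < z.im →
      f (z + 2 * Real.pi) = Complex.exp (2 * Real.pi * Complex.I * α) * f z) :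
    ∃ G : ℂ → ℂ, DifferentiableOn ℂ G (Metric.ball (0 : ℂ) 1) ∧
      ∀ z : ℂ, 0 < z.im →
        f z = Complex.exp (Complex.I * α * z) * G (Complex.exp (Complex.I * z)) := by
  set ψ : ℂ → ℂ := fun z => exp (-(I * α * z)) * f z
  have hψ_per : ∀ z, 0 < z.im → ψ (z + ↑(2 * π)) = ψ z := fun z hz => by
    simp only [ψ, ofReal_mul, ofReal_ofNat, hper z hz, ← mul_assoc, ← exp_add]
    ring_nf
  have hψ_diff : DifferentiableOn ℂ ψ upperHalfPlaneSet :=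
    ((differentiable_exp.comp (by fun_prop)).differentiableOn).mul hf
  -- Extending `ψ` by zero off `ℍ` makes it periodic on all of `ℂ`, as `cuspFunction` requires.
  have hF_per : Periodic (upperHalfPlaneSet.indicator ψ) ↑(2 * π) :=
    periodic_indicator_upperHalfPlaneSet hψ_per
  refine ⟨cuspFunction (2 * π) (upperHalfPlaneSet.indicator ψ),
    differentiableOn_cuspFunction_ball Real.two_pi_pos hF_per
      (fun z hz => differentiableAt_indicator_upperHalfPlaneSet hψ_diff hz) hα1 (fun z hz => ?_),
    fun z hz => ?_⟩
  · rw [indicator_of_mem (show z ∈ upperHalfPlaneSet from hz), norm_mul,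
      norm_exp_neg_I_mul_ofReal_mul, qParam_two_pi]
    exact mul_le_of_le_one_right (by positivity) (hmaps z hz).le
  · rw [← qParam_two_pi, eq_cuspFunction Real.two_pi_pos.ne' hF_per,
      indicator_of_mem (show z ∈ upperHalfPlaneSet from hz), ← mul_assoc, ← exp_add,
      add_neg_cancel, exp_zero, one_mul]

/-- A holomorphic map `f` from the upper half-plane into the unit disk with
`f(z + 2π) = e^{2πiα} f(z)`, `0 < α < 1`, factors as `f(z) = e^{iαz} G(e^{iz})` with `G`
holomorphic on the full unit disk. -/
theorem elliptic_developing_map_structure (α : ℝ) (hα0 : 0 < α) (hα1 : α < 1) (f : ℂ → ℂ)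
    (hf : DifferentiableOn ℂ f {z : ℂ | 0 < z.im})
    (hmaps : ∀ z : ℂ, 0 < z.im → ‖f z‖ < 1)
    (hper : ∀ z : ℂ, 0 < z.im →
      f (z + 2 * Real.pi) = Complex.exp (2 * Real.pi * Complex.I * α) * f z) :
    ∃ G : ℂ → ℂ, DifferentiableOn ℂ G (Metric.ball (0 : ℂ) 1) ∧
      ∀ z : ℂ, 0 < z.im →
        f z = Complex.exp (Complex.I * α * z) * G (Complex.exp (Complex.I * z)) :=
  elliptic_developing_map_structure_general α hα1 f hf hmaps hper
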